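/- arXiv:2112.04097 — 2 statements merged into one kernel-verified Lean document; each statement's English description precedes it below -/
import Mathlib

section
/- If D is a digraph with strongly connected components D_1, …, D_k, then the complementarity spectrum of D equals the union of the complementarity spectra of the D_i. -/
open Matrix
open scoped Classical

noncomputable section

/-- Adjacency matrix of a digraph given by an arc relation `E`. -/
def adjMat {V : Type*} (E : V → V → Prop) : Matrix V V ℝ :=
  Matrix.of fun i j => if E i j then (1 : ℝ) else 0

/-- Spectral radius of a real square matrix: the largest modulus of a (complex) eigenvalue. -/
def matSpecRad {n : Type*} [Fintype n] (A : Matrix n n ℝ) : ℝ :=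
  sSup {r : ℝ | ∃ μ ∈ spectrum ℂ (A.map (fun x => (x : ℂ))), r = ‖μ‖}

/-- Spectral radius of a digraph. -/
def rho {V : Type*} [Fintype V] (E : V → V → Prop) : ℝ :=
  matSpecRad (adjMat E)

/-- The complementarity spectrum of a real square matrix. -/
def compSpec {n : Type*} [Fintype n] (A : Matrix n n ℝ) : Set ℝ :=
  {lam | ∃ x : n → ℝ, x ≠ 0 ∧ 0 ≤ x ∧ 0 ≤ A.mulVec x - lam • x ∧
    x ⬝ᵥ (A.mulVec x - lam • x) = 0}

/-- Reachability by directed paths. -/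
def Reach {V : Type*} (E : V → V → Prop) : V → V → Prop :=
  Relation.ReflTransGen E

/-- A digraph is strongly connected if every vertex reaches every other one. -/
def StronglyConnected {V : Type*} (E : V → V → Prop) : Prop :=
  ∀ u v, Reach E u v

/-- Induced subdigraph on a vertex subset `S`. -/
def induceRel {V : Type*} (E : V → V → Prop) (S : Set V) : S → S → Prop :=
  fun a b => E a.1 b.1

/-- Spectral radius of the induced subdigraph on `S`. -/
def specRadOn {V : Type*} [Fintype V] (E : V → V → Prop) (S : Set V) : ℝ :=
  @rho S (Set.Finite.fintype S.toFinite) (induceRel E S)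

/-- Complementarity spectrum of the induced subdigraph on `S`. -/
def compSpecOn {V : Type*} [Fintype V] (E : V → V → Prop) (S : Set V) : Set ℝ :=
  @compSpec S (Set.Finite.fintype S.toFinite) (adjMat (induceRel E S))

/-- Isomorphism of digraphs. -/
def IsoDigraph {V W : Type*} (E : V → V → Prop) (F : W → W → Prop) : Prop :=
  ∃ e : V ≃ W, ∀ a b, E a b ↔ F (e a) (e b)

/-- The directed cycle on `n` vertices. -/
def cycleRel (n : ℕ) : ZMod n → ZMod n → Prop := fun i j => j = i + 1

/-- A digraph is a directed cycle if it is isomorphic to some `C⃗_n`, `n ≥ 2`. -/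
def IsCycleDigraph {V : Type*} (E : V → V → Prop) : Prop :=
  ∃ n : ℕ, 2 ≤ n ∧ IsoDigraph E (cycleRel n)

/-- A digraph is acyclic if it has no directed cycle. -/
def Acyclic {V : Type*} (E : V → V → Prop) : Prop :=
  ∀ v, ¬ Relation.TransGen E v v

/-- Strongly connected component of the vertex `v`. -/
def component {V : Type*} (E : V → V → Prop) (v : V) : Set V :=
  {u | Reach E u v ∧ Reach E v u}

/-- `D` has an `∞(r,s)`-subdigraph: two directed cycles of lengths `r` and `s`
sharing exactly one vertex, all of whose arcs are arcs of `D`. -/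
def InftySub {V : Type*} (E : V → V → Prop) (r s : ℕ) : Prop :=
  ∃ (f : ZMod r → V) (g : ZMod s → V),
    Function.Injective f ∧ Function.Injective g ∧ f 0 = g 0 ∧
    Set.range f ∩ Set.range g = {f 0} ∧
    (∀ i, E (f i) (f (i + 1))) ∧ (∀ j, E (g j) (g (j + 1)))

/-- `D` has a `θ(a,b,c)`-subdigraph: three internally disjoint directed paths,
two from `v` to `w` (of lengths `a+1` and `b+1`) and one from `w` to `v`
(of length `c+1`), all of whose arcs are arcs of `D`. -/
def ThetaSub {V : Type*} (E : V → V → Prop) (a b c : ℕ) : Prop :=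
  ∃ (P : Fin (a + 2) → V) (Q : Fin (b + 2) → V) (R : Fin (c + 2) → V),
    Function.Injective P ∧ Function.Injective Q ∧ Function.Injective R ∧
    P 0 = Q 0 ∧ Q 0 = R (Fin.last (c + 1)) ∧
    P (Fin.last (a + 1)) = Q (Fin.last (b + 1)) ∧ Q (Fin.last (b + 1)) = R 0 ∧
    (∀ i j, P i = Q j → (i = 0 ∧ j = 0) ∨ (i = Fin.last (a + 1) ∧ j = Fin.last (b + 1))) ∧
    (∀ i j, P i = R j → (i = 0 ∧ j = Fin.last (c + 1)) ∨ (i = Fin.last (a + 1) ∧ j = 0)) ∧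
    (∀ i j, Q i = R j → (i = 0 ∧ j = Fin.last (c + 1)) ∨ (i = Fin.last (b + 1) ∧ j = 0)) ∧
    (∀ i : Fin (a + 1), E (P i.castSucc) (P i.succ)) ∧
    (∀ i : Fin (b + 1), E (Q i.castSucc) (Q i.succ)) ∧
    (∀ i : Fin (c + 1), E (R i.castSucc) (R i.succ))

/-- `D` is (isomorphic to) the `∞(r,s)` digraph: the coalescence of the directed
cycles `C⃗_r` and `C⃗_s` at one vertex, with no further vertices or arcs. -/
def IsInftyDigraph {V : Type*} (E : V → V → Prop) (r s : ℕ) : Prop :=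
  ∃ (f : ZMod r → V) (g : ZMod s → V),
    Function.Injective f ∧ Function.Injective g ∧ f 0 = g 0 ∧
    Set.range f ∩ Set.range g = {f 0} ∧
    Set.range f ∪ Set.range g = Set.univ ∧
    ∀ u v, E u v ↔ ((∃ i, u = f i ∧ v = f (i + 1)) ∨ (∃ j, u = g j ∧ v = g (j + 1)))

/-- `D` is (isomorphic to) the `θ(a,b,c)` digraph: three internally disjoint
directed paths, two from `v` to `w` and one from `w` to `v`, with no further
vertices or arcs. -/
def IsThetaDigraph {V : Type*} (E : V → V → Prop) (a b c : ℕ) : Prop :=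
  ∃ (P : Fin (a + 2) → V) (Q : Fin (b + 2) → V) (R : Fin (c + 2) → V),
    Function.Injective P ∧ Function.Injective Q ∧ Function.Injective R ∧
    P 0 = Q 0 ∧ Q 0 = R (Fin.last (c + 1)) ∧
    P (Fin.last (a + 1)) = Q (Fin.last (b + 1)) ∧ Q (Fin.last (b + 1)) = R 0 ∧
    (∀ i j, P i = Q j → (i = 0 ∧ j = 0) ∨ (i = Fin.last (a + 1) ∧ j = Fin.last (b + 1))) ∧
    (∀ i j, P i = R j → (i = 0 ∧ j = Fin.last (c + 1)) ∨ (i = Fin.last (a + 1) ∧ j = 0)) ∧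
    (∀ i j, Q i = R j → (i = 0 ∧ j = Fin.last (c + 1)) ∨ (i = Fin.last (b + 1) ∧ j = 0)) ∧
    Set.range P ∪ Set.range Q ∪ Set.range R = Set.univ ∧
    (∀ u v, E u v ↔
      ((∃ i : Fin (a + 1), u = P i.castSucc ∧ v = P i.succ) ∨
       (∃ i : Fin (b + 1), u = Q i.castSucc ∧ v = Q i.succ) ∨
       (∃ i : Fin (c + 1), u = R i.castSucc ∧ v = R i.succ)))

/-! On its support a complementarity solution `x ≥ 0` of a nonnegative matrix `A` satisfies
`(A x)ᵢ = λ xᵢ`, and elsewhere only `(A x)ᵢ ≥ 0` is required. Hence a solution on an induced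
subdigraph, extended by zero, is a solution on `D`. Conversely, given a solution `x` on `D`, take a
support vertex `v` that is minimal for reachability among the support vertices. Any arc from a
support vertex of the strong component of `v` to a support vertex stays in that component, so
restricting `x` to the component leaves the rows of `A x` on the support unchanged. -/

namespace Matrix

variable {n : Type*} [Fintype n]

def IsCompSolution (A : Matrix n n ℝ) (lam : ℝ) (x : n → ℝ) : Prop :=
  ∀ i, 0 ≤ x i ∧ lam * x i ≤ (A *ᵥ x) i ∧ (x i = 0 ∨ (A *ᵥ x) i = lam * x i)

theorem mem_compSpec_iff {A : Matrix n n ℝ} {lam : ℝ} :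
    lam ∈ compSpec A ↔ ∃ x ≠ 0, A.IsCompSolution lam x := by
  refine exists_congr fun x => and_congr_right fun _ => ?_
  simp only [dotProduct, Pi.le_def, Pi.sub_apply, Pi.smul_apply, smul_eq_mul, Pi.zero_apply,
    sub_nonneg]
  constructor
  · rintro ⟨hx, hAx, hsum⟩ i
    have hterm := (Finset.sum_eq_zero_iff_of_nonneg fun j _ =>
      mul_nonneg (hx j) (sub_nonneg.2 (hAx j))).1 hsum i (Finset.mem_univ i)
    exact ⟨hx i, hAx i, (mul_eq_zero.1 hterm).imp_right sub_eq_zero.1⟩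
  · intro h
    refine ⟨fun i => (h i).1, fun i => (h i).2.1, Finset.sum_eq_zero fun i _ => ?_⟩
    rcases (h i).2.2 with h0 | h1 <;> simp [*]

theorem mulVec_nonneg {m : Type*} {A : Matrix m n ℝ} (hA : ∀ i j, 0 ≤ A i j) {x : n → ℝ}
    (hx : 0 ≤ x) : 0 ≤ A *ᵥ x :=
  fun i => Finset.sum_nonneg fun j _ => mul_nonneg (hA i j) (hx j)

theorem submatrix_mulVec_comp_val (A : Matrix n n ℝ) (S : Set n) [Fintype S] (x : n → ℝ)
    (i : S) (h : ∀ j ∉ S, A i j * x j = 0) :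
    ((A.submatrix Subtype.val Subtype.val : Matrix S S ℝ) *ᵥ (x ∘ Subtype.val)) i = (A *ᵥ x) i := by
  simp only [mulVec, dotProduct, submatrix_apply, Function.comp_apply]
  rw [Finset.sum_set_coe (f := fun j => A i j * x j)]
  exact Fintype.sum_subset fun j hj => Set.mem_toFinset.2 (by_contra fun hjS => hj (h j hjS))

theorem compSpec_submatrix_subset {A : Matrix n n ℝ} (hA : ∀ i j, 0 ≤ A i j) (S : Set n)
    {_ : Fintype S} :
    compSpec (A.submatrix Subtype.val Subtype.val : Matrix S S ℝ) ⊆ compSpec A := by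
  intro lam h
  obtain ⟨y, hy0, hy⟩ := mem_compSpec_iff.1 h
  set x : n → ℝ := Function.extend Subtype.val y 0
  have hxy : x ∘ Subtype.val = y := funext (Subtype.val_injective.extend_apply y 0)
  have hx_out : ∀ j ∉ S, x j = 0 := fun j hj =>
    Function.extend_apply' _ _ _ fun ⟨i, hi⟩ => hj (hi ▸ i.2)
  have hx : 0 ≤ x := fun j => by
    by_cases hj : j ∈ S
    · lift j to S using hj
      exact (hy j).1.trans_eq (congrFun hxy j).symm
    · exact (hx_out j hj).ge
  refine mem_compSpec_iff.2 ⟨x, fun h0 => hy0 (by rw [← hxy, h0]; rfl), fun j => ?_⟩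
  by_cases hj : j ∈ S
  · lift j to S using hj
    have hyj := hy j
    rwa [← hxy, submatrix_mulVec_comp_val A S x j fun k hk => by rw [hx_out k hk, mul_zero]]
      at hyj
  · rw [hx_out j hj, mul_zero]
    exact ⟨le_rfl, mulVec_nonneg hA hx j, Or.inl rfl⟩

theorem mem_compSpec_submatrix {A : Matrix n n ℝ} (hA : ∀ i j, 0 ≤ A i j) {lam : ℝ} {x : n → ℝ}
    (hx : A.IsCompSolution lam x) (S : Set n) {_ : Fintype S}
    (hS : ∀ i ∈ S, ∀ j, x i ≠ 0 → A i j ≠ 0 → x j ≠ 0 → j ∈ S) (hSx : ∃ i ∈ S, x i ≠ 0) :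
    lam ∈ compSpec (A.submatrix Subtype.val Subtype.val : Matrix S S ℝ) := by
  obtain ⟨v, hvS, hv⟩ := hSx
  refine mem_compSpec_iff.2 ⟨x ∘ Subtype.val, fun h => hv (congrFun h ⟨v, hvS⟩), fun i => ?_⟩
  by_cases h0 : x i = 0
  · have hAy := mulVec_nonneg (A := A.submatrix Subtype.val Subtype.val)
      (fun j k => hA j.1 k.1) (fun j : S => (hx j.1).1) i
    exact ⟨(hx i).1, by rw [Function.comp_apply, h0, mul_zero]; exact hAy, Or.inl h0⟩
  · rw [submatrix_mulVec_comp_val A S x i fun j hj => by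
      by_contra hAxj
      exact hj (hS i i.2 j h0 (left_ne_zero_of_mul hAxj) (right_ne_zero_of_mul hAxj))]
    exact hx i

end Matrix

theorem Relation.exists_reflTransGen_minimal {V : Type*} [Finite V] (r : V → V → Prop)
    {s : Set V} (hs : s.Nonempty) :
    ∃ v ∈ s, ∀ u ∈ s, ReflTransGen r v u → ReflTransGen r u v := by
  let below : V → V → Prop := fun a b => ReflTransGen r b a ∧ ¬ ReflTransGen r a b
  have : IsTrans V below :=
    ⟨fun a b c hab hbc => ⟨hbc.1.trans hab.1, fun hac => hab.2 (hac.trans hbc.1)⟩⟩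
  have : Std.Irrefl below := ⟨fun a h => h.2 h.1⟩
  obtain ⟨v, hv, hmin⟩ := (Finite.wellFounded_of_trans_of_irrefl below).has_min s hs
  exact ⟨v, hv, fun u hu hvu => by_contra fun hnot => hmin u hu ⟨hvu, hnot⟩⟩

theorem adjMat_nonneg {V : Type*} (E : V → V → Prop) (i j : V) : 0 ≤ adjMat E i j := by
  simp only [adjMat, of_apply]
  split_ifs <;> norm_num

theorem adjMat_ne_zero_iff {V : Type*} {E : V → V → Prop} {i j : V} :
    adjMat E i j ≠ 0 ↔ E i j := by
  simp [adjMat]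

theorem adjMat_induceRel {V : Type*} (E : V → V → Prop) (S : Set V) :
    adjMat (induceRel E S) = (adjMat E).submatrix Subtype.val Subtype.val :=
  rfl

/-- the complementarity spectrum of a digraph is the union of the
complementarity spectra of its strongly connected components. -/
theorem stmt6 {V : Type*} [Fintype V] (E : V → V → Prop) :
    compSpec (adjMat E) = ⋃ v : V, compSpecOn E (component E v) := by
  ext lam
  simp only [Set.mem_iUnion, compSpecOn, adjMat_induceRel]
  constructor
  · intro h
    obtain ⟨x, hx0, hx⟩ := Matrix.mem_compSpec_iff.1 h
    obtain ⟨v, hv, hmin⟩ :=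
      Relation.exists_reflTransGen_minimal E (Function.support_nonempty_iff.2 hx0)
    refine ⟨v, Matrix.mem_compSpec_submatrix (adjMat_nonneg E) hx _ ?_ ⟨v, ⟨.refl, .refl⟩, hv⟩⟩
    intro i hi j _ hij hj
    have hvj : Reach E v j := hi.2.tail (adjMat_ne_zero_iff.1 hij)
    exact ⟨hmin j hj hvj, hvj⟩
  · rintro ⟨v, h⟩
    exact Matrix.compSpec_submatrix_subset (adjMat_nonneg E) _ h
end
end

section
/- A finite digraph D has complementarity spectrum {0,1} if and only if D contains a directed cycle and every strongly connected component of D is either a directed cycle or an isolated vertex. -/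
/-!
A complementarity eigenvalue `λ ≠ 0` of the adjacency matrix `A` comes with a vector `x ≥ 0`
such that `A x = λ x` on the support of `x`, so every vertex of the support has an out-neighbour
in the support. If every strong component is a vertex or a directed cycle, then in a terminal
strong component of the support each vertex `i` has exactly one such out-neighbour `s i`, whence
`λ x i = x (s i)` there and comparing the largest and the smallest `x i` gives `λ = 1`. The values
`0` and `1` are attained by a loopless vertex and by the indicator of a cyclic component.

Conversely, a strong component that is neither a vertex nor a cycle has a vertex of out-degree at
least two. The Collatz–Wielandt argument then yields a nonnegative eigenvector of that component
with eigenvalue `> 1`, and extended by zero it is a complementarity eigenvector of the digraph.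
-/

open Matrix
open scoped Classical

noncomputable section

open scoped Finset
open Relation

lemma exists_pos_of_ne_zero {ι : Type*} {x : ι → ℝ} (hx : 0 ≤ x) (hx0 : x ≠ 0) :
    ∃ i, 0 < x i := by
  obtain ⟨i, hi⟩ := Function.ne_iff.1 hx0
  exact ⟨i, (hx i).lt_of_ne' hi⟩

lemma eq_one_of_forall_mul_eq_comp {ι : Type*} [Finite ι] [Nonempty ι] {x : ι → ℝ}
    (hx : ∀ i, 0 < x i) (s : ι → ι) {lam : ℝ} (h : ∀ i, lam * x i = x (s i)) :
    lam = 1 := by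
  obtain ⟨i, hi⟩ := Finite.exists_max x
  obtain ⟨j, hj⟩ := Finite.exists_min x
  have hle : lam * x i ≤ 1 * x i := by rw [h, one_mul]; exact hi _
  have hge : 1 * x j ≤ lam * x j := by rw [h, one_mul]; exact hj _
  exact le_antisymm (le_of_mul_le_mul_right hle (hx i)) (le_of_mul_le_mul_right hge (hx j))

open Filter Topology in
lemma exists_pos_smul_le {ι : Type*} [Finite ι] (u : ι → ℝ) {v : ι → ℝ}
    (hv : ∀ i, 0 < v i) :
    ∃ ε > (0 : ℝ), ε • u ≤ v := by
  have hsmall : ∀ᶠ ε in 𝓝 (0 : ℝ), ∀ i, ε * u i < v i := eventually_all.2 fun i =>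
    (continuous_id.mul continuous_const).continuousAt.eventually_lt continuousAt_const
      (by simpa using hv i)
  obtain ⟨ε, hε, hε0⟩ := ((eventually_nhdsWithin_of_eventually_nhds hsmall).and
    (self_mem_nhdsWithin (s := Set.Ioi 0))).exists
  exact ⟨ε, hε0, fun i => (hε i).le⟩

lemma exists_mem_stdSimplex_smul_le {α : Type*} [Fintype α] {A : Matrix α α ℝ} {mu : ℝ}
    {y : α → ℝ} (hy : 0 ≤ y) (hy0 : y ≠ 0) (h : mu • y ≤ A *ᵥ y) :
    ∃ z ∈ stdSimplex ℝ α, mu • z ≤ A *ᵥ z := by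
  obtain ⟨i, hi⟩ := exists_pos_of_ne_zero hy hy0
  have hsum : 0 < ∑ j, y j := Finset.sum_pos' (fun j _ => hy j) ⟨i, Finset.mem_univ i, hi⟩
  have hc : 0 ≤ (∑ j, y j)⁻¹ := inv_nonneg.2 hsum.le
  refine ⟨(∑ j, y j)⁻¹ • y, ⟨fun j => mul_nonneg hc (hy j), ?_⟩, ?_⟩
  · simp [← Finset.mul_sum, inv_mul_cancel₀ hsum.ne']
  · rw [smul_comm, mulVec_smul]
    exact smul_le_smul_of_nonneg_left h hc

section Reachability

variable {α : Type*} {r : α → α → Prop}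

variable (r) in
lemma exists_reflTransGen_terminal [Finite α] (a : α) :
    ∃ u, ReflTransGen r a u ∧ ∀ w, ReflTransGen r u w → ReflTransGen r w u := by
  obtain ⟨u, hau, hmin⟩ := Set.Finite.exists_minimalFor (fun u => {w | ReflTransGen r u w})
    {u | ReflTransGen r a u} (Set.toFinite _) ⟨a, .refl⟩
  exact ⟨u, hau, fun w huw => hmin (hau.trans huw) (fun z hz => huw.trans hz) ReflTransGen.refl⟩

lemma exists_transGen_self [Finite α] [Nonempty α] (h : ∀ a, ∃ b, r a b) :
    ∃ u, TransGen r u u := by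
  obtain ⟨u, -, hterm⟩ := exists_reflTransGen_terminal r (Classical.arbitrary α)
  obtain ⟨b, hub⟩ := h u
  exact ⟨u, .head' hub (hterm b (.single hub))⟩

lemma exists_adj_of_forall_reflTransGen [Nontrivial α] (hsc : ∀ a b, ReflTransGen r a b)
    (a : α) : ∃ b, r a b := by
  obtain ⟨t, hta⟩ := exists_ne a
  rcases (hsc a t).cases_head with h | ⟨b, hab, -⟩
  · exact absurd h.symm hta
  · exact ⟨b, hab⟩

end Reachability

section Cycles

variable {α : Type*} {F : α → α → Prop}

lemma IsCycleDigraph.exists_adj_iff (h : IsCycleDigraph F) :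
    ∃ s : α → α, ∀ a b, F a b ↔ b = s a := by
  obtain ⟨n, -, e, he⟩ := h
  exact ⟨fun a => e.symm (e a + 1), fun a b => (he a b).trans (Equiv.eq_symm_apply e).symm⟩

lemma isCycleDigraph_of_adj_iff [Fintype α] [Nontrivial α] (hsc : ∀ a b, ReflTransGen F a b)
    (s : α → α) (hs : ∀ a b, F a b ↔ b = s a) : IsCycleDigraph F := by
  obtain ⟨a₀⟩ := ‹Nontrivial α›.to_nonempty
  have horbit : ∀ b c, ∃ k, s^[k] b = c := fun b c => by
    induction hsc b c with
    | refl => exact ⟨0, rfl⟩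
    | tail _ hstep ih =>
      obtain ⟨k, rfl⟩ := ih
      exact ⟨k + 1, by rw [Function.iterate_succ_apply', ← (hs _ _).1 hstep]⟩
  obtain ⟨k₀, hk₀⟩ := horbit (s a₀) a₀
  have hperiodic : Function.IsPeriodicPt s (k₀ + 1) a₀ := by
    rw [Function.IsPeriodicPt, Function.IsFixedPt, Function.iterate_succ_apply, hk₀]
  set p := Function.minimalPeriod s a₀
  have : NeZero p := ⟨(hperiodic.minimalPeriod_pos k₀.succ_pos).ne'⟩
  let f : ZMod p → α := fun k => s^[k.val] a₀
  have hf : Function.Bijective f := by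
    refine ⟨fun k l hkl => ZMod.val_injective p
      (Function.iterate_injOn_Iio_minimalPeriod (ZMod.val_lt k) (ZMod.val_lt l) hkl), fun b => ?_⟩
    obtain ⟨k, rfl⟩ := horbit a₀ b
    exact ⟨k, by simp only [f, ZMod.val_natCast]; exact Function.iterate_mod_minimalPeriod_eq⟩
  let e := Equiv.ofBijective f hf
  have hp : 2 ≤ p := by
    rw [← ZMod.card p, Fintype.card_congr e]
    exact Fintype.one_lt_card
  have : Fact (1 < p) := ⟨hp⟩
  have hf_succ : ∀ k, f (k + 1) = s (f k) := fun k => by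
    simp only [f, ZMod.val_add, ZMod.val_one, ← Function.iterate_succ_apply' s k.val a₀]
    exact Function.iterate_mod_minimalPeriod_eq
  refine ⟨p, hp, e.symm, fun a b => ?_⟩
  obtain ⟨k, rfl⟩ := e.surjective a
  obtain ⟨l, rfl⟩ := e.surjective b
  change F (f k) (f l) ↔ e.symm (e l) = e.symm (e k) + 1
  rw [e.symm_apply_apply, e.symm_apply_apply, hs, ← hf_succ, hf.1.eq_iff]

lemma isCycleDigraph_or_exists_adj_adj_ne [Fintype α] [Nontrivial α]
    (hsc : ∀ a b, ReflTransGen F a b) :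
    IsCycleDigraph F ∨ ∃ a b c, F a b ∧ F a c ∧ b ≠ c := by
  by_contra! h
  choose s hs using exists_adj_of_forall_reflTransGen hsc
  exact h.1 (isCycleDigraph_of_adj_iff hsc s fun a b =>
    ⟨fun hab => h.2 a b (s a) hab (hs a), fun hb => hb ▸ hs a⟩)

end Cycles

section Components

variable {V : Type*} {E : V → V → Prop}

lemma mem_component_self (E : V → V → Prop) (v : V) : v ∈ component E v :=
  ⟨.refl, .refl⟩

lemma reflTransGen_induceRel_component {v : V} (a b : component E v) :
    ReflTransGen (induceRel E (component E v)) a b := by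
  obtain ⟨a, ha⟩ := a
  obtain ⟨b, hb⟩ := b
  induction (ha.1.trans hb.2 : ReflTransGen E a b) using ReflTransGen.head_induction_on with
  | refl => rfl
  | head hac hcb ih =>
    have hc : _ ∈ component E v := ⟨hcb.trans hb.1, ha.2.tail hac⟩
    exact .head (show induceRel E (component E v) ⟨_, ha⟩ ⟨_, hc⟩ from hac) (ih hc)

lemma eq_of_adj_of_mem_component {v : V}
    (hv : component E v = {v} ∨ IsCycleDigraph (induceRel E (component E v)))
    {a b c : V} (ha : a ∈ component E v) (hb : b ∈ component E v) (hc : c ∈ component E v)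
    (hab : E a b) (hac : E a c) : b = c := by
  rcases hv with hv | hv
  · rw [hv] at hb hc
    exact hb.trans hc.symm
  · obtain ⟨s, hs⟩ := hv.exists_adj_iff
    have hb' := (hs ⟨a, ha⟩ ⟨b, hb⟩).1 hab
    have hc' := (hs ⟨a, ha⟩ ⟨c, hc⟩).1 hac
    exact congrArg Subtype.val (hb'.trans hc'.symm)

end Components

section AdjacencyMatrix

variable {V : Type*} [Fintype V] {E : V → V → Prop}

lemma adjMat_mulVec_apply (E : V → V → Prop) (x : V → ℝ) (i : V) :
    (adjMat E *ᵥ x) i = ∑ j with E i j, x j := by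
  simp [adjMat, mulVec, dotProduct, Finset.sum_filter, ite_mul]

lemma adjMat_mulVec_nonneg (E : V → V → Prop) {x : V → ℝ} (hx : 0 ≤ x) :
    0 ≤ adjMat E *ᵥ x := fun i => by
  rw [Pi.zero_apply, adjMat_mulVec_apply]
  exact Finset.sum_nonneg fun j _ => hx j

lemma adjMat_mulVec_le_sum (E : V → V → Prop) {x : V → ℝ} (hx : 0 ≤ x) (i : V) :
    (adjMat E *ᵥ x) i ≤ ∑ j, x j := by
  rw [adjMat_mulVec_apply]
  exact Finset.sum_le_sum_of_subset_of_nonneg (Finset.filter_subset _ _) fun j _ _ => hx j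

lemma adjMat_mulVec_one (E : V → V → Prop) (i : V) :
    (adjMat E *ᵥ fun _ => 1) i = (#{j | E i j} : ℝ) := by
  simp [adjMat_mulVec_apply]

lemma mem_compSpec_adjMat_iff {lam : ℝ} :
    lam ∈ compSpec (adjMat E) ↔
      ∃ x : V → ℝ, x ≠ 0 ∧ 0 ≤ x ∧
        ∀ i, 0 < x i → (adjMat E *ᵥ x) i = lam * x i := by
  constructor
  · rintro ⟨x, hx0, hx, hle, hdot⟩
    refine ⟨x, hx0, hx, fun i hi => ?_⟩
    have hterm := (Finset.sum_eq_zero_iff_of_nonneg fun j _ => mul_nonneg (hx j) (hle j)).1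
      hdot i (Finset.mem_univ i)
    simp only [Pi.sub_apply, Pi.smul_apply, smul_eq_mul, mul_eq_zero, hi.ne', false_or,
      sub_eq_zero] at hterm
    exact hterm
  · rintro ⟨x, hx0, hx, heq⟩
    have hcompl : ∀ i, x i * (adjMat E *ᵥ x - lam • x) i = 0 := fun i => by
      rcases (hx i).eq_or_lt with h | h
      · simp [← h]
      · simp [heq i h]
    refine ⟨x, hx0, hx, fun i => ?_, Finset.sum_eq_zero fun i _ => hcompl i⟩
    rcases (hx i).eq_or_lt with h | h
    · simpa [← h] using adjMat_mulVec_nonneg E hx i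
    · simp [heq i h]

lemma zero_mem_compSpec_adjMat [Nonempty V] (hloop : ∀ v, ¬ E v v) :
    0 ∈ compSpec (adjMat E) := by
  obtain ⟨v⟩ := ‹Nonempty V›
  refine mem_compSpec_adjMat_iff.2 ⟨Pi.single v 1, by simp, Pi.single_nonneg.2 zero_le_one,
    fun i hi => ?_⟩
  obtain rfl : i = v := by by_contra h; simp [h] at hi
  rw [zero_mul, adjMat_mulVec_apply]
  refine Finset.sum_eq_zero fun j hj => Pi.single_eq_of_ne ?_ _
  rintro rfl
  exact hloop j (Finset.mem_filter.1 hj).2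

lemma exists_adj_pos_of_mulVec_eq {x : V → ℝ} (hx : 0 ≤ x) {lam : ℝ} (hlam : lam ≠ 0)
    {i : V} (hi : 0 < x i) (heq : (adjMat E *ᵥ x) i = lam * x i) : ∃ j, E i j ∧ 0 < x j := by
  by_contra! h
  have : (adjMat E *ᵥ x) i = 0 := by
    rw [adjMat_mulVec_apply]
    exact Finset.sum_eq_zero fun j hj => le_antisymm (h j (Finset.mem_filter.1 hj).2) (hx j)
  exact mul_ne_zero hlam hi.ne' (heq ▸ this)

lemma compSpec_adjMat_induceRel_subset (S : Set V) [Fintype S] :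
    compSpec (adjMat (induceRel E S)) ⊆ compSpec (adjMat E) := by
  intro lam hlam
  obtain ⟨x, hx0, hx, heq⟩ := mem_compSpec_adjMat_iff.1 hlam
  set y : V → ℝ := fun i => if h : i ∈ S then x ⟨i, h⟩ else 0
  have hy : ∀ a : S, y a = x a := fun a => dif_pos a.2
  have hmulVec : ∀ a : S, (adjMat E *ᵥ y) a = (adjMat (induceRel E S) *ᵥ x) a := fun a => by
    simp only [mulVec, dotProduct]
    have h := Finset.sum_congr_set S (fun j => adjMat E a j * y j)
      (fun b => adjMat (induceRel E S) a b * x b) (fun j hj => by simp only [y, dif_pos hj]; rfl)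
      (fun j hj => by simp [y, hj])
    convert h
  refine mem_compSpec_adjMat_iff.2
    ⟨y, fun h => hx0 (funext fun a => by simpa [hy] using congrFun h a), fun i => ?_,
      fun i hi => ?_⟩
  · by_cases h : i ∈ S
    · exact (hy ⟨i, h⟩).symm ▸ hx _
    · simp [y, h]
  · have h : i ∈ S := by by_contra h; simp [y, h] at hi
    rw [hmulVec ⟨i, h⟩, hy ⟨i, h⟩, heq _ (hy ⟨i, h⟩ ▸ hi)]

end AdjacencyMatrix

section Spectrum

variable {V : Type*} [Fintype V] {E : V → V → Prop}

lemma exists_transGen_self_of_mem_compSpec {lam : ℝ} (hlam0 : lam ≠ 0)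
    (hlam : lam ∈ compSpec (adjMat E)) : ∃ v, TransGen E v v := by
  obtain ⟨x, hx0, hx, heq⟩ := mem_compSpec_adjMat_iff.1 hlam
  obtain ⟨i, hi⟩ := exists_pos_of_ne_zero hx hx0
  have : Nonempty {i // 0 < x i} := ⟨⟨i, hi⟩⟩
  obtain ⟨u, hu⟩ := exists_transGen_self (r := fun a b : {i // 0 < x i} => E a b) fun a => by
    obtain ⟨b, hab, hb⟩ := exists_adj_pos_of_mulVec_eq hx hlam0 a.2 (heq a a.2)
    exact ⟨⟨b, hb⟩, hab⟩
  exact ⟨u, hu.lift Subtype.val fun _ _ h => h⟩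

theorem compSpec_adjMat_subset_zero_one
    (h : ∀ v, ∀ a ∈ component E v, ∀ b ∈ component E v, ∀ c ∈ component E v,
      E a b → E a c → b = c) :
    compSpec (adjMat E) ⊆ {0, 1} := by
  intro lam hlam
  obtain ⟨x, hx0, hx, heq⟩ := mem_compSpec_adjMat_iff.1 hlam
  rcases eq_or_ne lam 0 with rfl | hlam0
  · exact .inl rfl
  refine .inr ?_
  obtain ⟨i₀, hi₀⟩ := exists_pos_of_ne_zero hx hx0
  let r : V → V → Prop := fun a b => E a b ∧ 0 < x b
  obtain ⟨u, hi₀u, hterm⟩ := exists_reflTransGen_terminal r i₀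
  let T : Set V := {w | ReflTransGen r u w}
  have hT_pos : ∀ w ∈ T, 0 < x w := fun w hw => by
    induction hi₀u.trans hw with
    | refl => exact hi₀
    | tail _ hbc => exact hbc.2
  have hT_comp : ∀ w ∈ T, w ∈ component E u := fun w hw =>
    ⟨ReflTransGen.mono (p := E) (fun _ _ h => h.1) _ _ (hterm w hw),
      ReflTransGen.mono (p := E) (fun _ _ h => h.1) _ _ hw⟩
  have hstep : ∀ i : T, ∃ j : T, lam * x i = x j := fun ⟨i, hi⟩ => by
    have hi_pos := hT_pos i hi
    obtain ⟨j, hij, hj⟩ := exists_adj_pos_of_mulVec_eq hx hlam0 hi_pos (heq i hi_pos)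
    have hjT : j ∈ T := hi.tail ⟨hij, hj⟩
    refine ⟨⟨j, hjT⟩, (heq i hi_pos).symm.trans ?_⟩
    -- another out-neighbour `k` with `0 < x k` would also lie in `T ⊆ component E u`
    rw [adjMat_mulVec_apply]
    refine Finset.sum_eq_single_of_mem j (Finset.mem_filter.2 ⟨Finset.mem_univ j, hij⟩)
      fun k hk hkj => le_antisymm (not_lt.1 fun hk' => hkj ?_) (hx k)
    have hkT : k ∈ T := hi.tail ⟨(Finset.mem_filter.1 hk).2, hk'⟩
    exact h u i (hT_comp i hi) k (hT_comp k hkT) j (hT_comp j hjT) (Finset.mem_filter.1 hk).2 hij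
  choose s hs using hstep
  have : Nonempty T := ⟨⟨u, .refl⟩⟩
  exact eq_one_of_forall_mul_eq_comp (fun i : T => hT_pos i i.2) s hs

lemma one_mem_compSpec_adjMat_of_isCycleDigraph (hE : IsCycleDigraph E) :
    1 ∈ compSpec (adjMat E) := by
  obtain ⟨s, hs⟩ := hE.exists_adj_iff
  refine mem_compSpec_adjMat_iff.2 ⟨fun _ => 1, ?_, fun _ => zero_le_one, fun i _ => ?_⟩
  · obtain ⟨n, hn, e, -⟩ := hE
    have : NeZero n := ⟨by omega⟩
    exact Function.ne_iff.2 ⟨e.symm 0, one_ne_zero⟩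
  · rw [adjMat_mulVec_one, mul_one, Finset.filter_congr fun j _ => hs i j,
      Finset.card_eq_one.2 ⟨s i, by ext; simp⟩, Nat.cast_one]

end Spectrum

section CollatzWielandt

variable {α : Type*} [Fintype α] {F : α → α → Prop}

lemma one_add_adjMat_pow_succ_mulVec (y : α → ℝ) (k : ℕ) :
    (1 + adjMat F) ^ (k + 1) *ᵥ y = (1 + adjMat F) *ᵥ ((1 + adjMat F) ^ k *ᵥ y) := by
  rw [pow_succ', mulVec_mulVec]

lemma le_adjMat_mulVec_of_adj {z : α → ℝ} (hz : 0 ≤ z) {i j : α} (hij : F i j) :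
    z j ≤ (adjMat F *ᵥ z) i := by
  rw [adjMat_mulVec_apply]
  exact Finset.single_le_sum (fun k _ => hz k) (Finset.mem_filter.2 ⟨Finset.mem_univ j, hij⟩)

lemma le_one_add_adjMat_mulVec {z : α → ℝ} (hz : 0 ≤ z) : z ≤ (1 + adjMat F) *ᵥ z := by
  rw [add_mulVec, one_mulVec]
  exact le_add_of_nonneg_right (adjMat_mulVec_nonneg F hz)

lemma one_add_adjMat_pow_mulVec_nonneg {y : α → ℝ} (hy : 0 ≤ y) (k : ℕ) :
    0 ≤ (1 + adjMat F) ^ k *ᵥ y := by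
  induction k with
  | zero => simpa using hy
  | succ k ih => rw [one_add_adjMat_pow_succ_mulVec]; exact ih.trans (le_one_add_adjMat_mulVec ih)

lemma monotone_one_add_adjMat_pow_mulVec {y : α → ℝ} (hy : 0 ≤ y) :
    Monotone fun k => (1 + adjMat F) ^ k *ᵥ y :=
  monotone_nat_of_le_succ fun k => by
    rw [one_add_adjMat_pow_succ_mulVec]
    exact le_one_add_adjMat_mulVec (one_add_adjMat_pow_mulVec_nonneg hy k)

lemma exists_pos_one_add_adjMat_pow_mulVec {y : α → ℝ} (hy : 0 ≤ y) {i j : α}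
    (hij : ReflTransGen F i j) (hj : 0 < y j) : ∃ k, 0 < ((1 + adjMat F) ^ k *ᵥ y) i := by
  induction hij using ReflTransGen.head_induction_on with
  | refl => exact ⟨0, by simpa using hj⟩
  | head hic _ ih =>
    obtain ⟨k, hk⟩ := ih
    have hnonneg := one_add_adjMat_pow_mulVec_nonneg (F := F) hy k
    refine ⟨k + 1, ?_⟩
    rw [one_add_adjMat_pow_succ_mulVec, add_mulVec, one_mulVec, Pi.add_apply]
    exact add_pos_of_nonneg_of_pos (hnonneg _) (hk.trans_le (le_adjMat_mulVec_of_adj hnonneg hic))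

lemma exists_forall_pos_one_add_adjMat_pow_mulVec (hsc : ∀ a b, ReflTransGen F a b)
    {y : α → ℝ} (hy : 0 ≤ y) (hy0 : y ≠ 0) :
    ∃ K, ∀ k ≥ K, ∀ i, 0 < ((1 + adjMat F) ^ k *ᵥ y) i := by
  obtain ⟨j, hj⟩ := exists_pos_of_ne_zero hy hy0
  choose k hk using fun i => exists_pos_one_add_adjMat_pow_mulVec hy (hsc i j) hj
  exact ⟨Finset.univ.sup k, fun m hm i => (hk i).trans_le
    (monotone_one_add_adjMat_pow_mulVec hy ((Finset.le_sup (Finset.mem_univ i)).trans hm) i)⟩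

/-- Wielandt's improvement step: if `lam • x ≤ A x` is strict somewhere, a high power `B` of
`1 + A`, which commutes with `A` and maps nonzero nonnegative vectors to positive ones, makes it
strict everywhere, so that `(lam + ε) • B x ≤ A (B x)` for some `ε > 0`. -/
lemma exists_gt_smul_le_adjMat_mulVec (hsc : ∀ a b, ReflTransGen F a b) {lam : ℝ}
    {x : α → ℝ} (hx : 0 ≤ x) (hle : lam • x ≤ adjMat F *ᵥ x)
    (hne : lam • x ≠ adjMat F *ᵥ x) :
    ∃ mu > lam, ∃ z ∈ stdSimplex ℝ α, mu • z ≤ adjMat F *ᵥ z := by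
  have hx0 : x ≠ 0 := by rintro rfl; simp at hne
  have hd : 0 ≤ adjMat F *ᵥ x - lam • x := sub_nonneg.2 hle
  have hd0 : adjMat F *ᵥ x - lam • x ≠ 0 := sub_ne_zero.2 hne.symm
  obtain ⟨K₁, hK₁⟩ := exists_forall_pos_one_add_adjMat_pow_mulVec hsc hx hx0
  obtain ⟨K₂, hK₂⟩ := exists_forall_pos_one_add_adjMat_pow_mulVec hsc hd hd0
  set B := (1 + adjMat F) ^ max K₁ K₂
  have hBA : B * adjMat F = adjMat F * B :=
    (((Commute.one_left _).add_left (Commute.refl _)).pow_left _).eq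
  have hBd :
      B *ᵥ (adjMat F *ᵥ x - lam • x) = adjMat F *ᵥ (B *ᵥ x) - lam • (B *ᵥ x) := by
    rw [mulVec_sub, mulVec_smul, mulVec_mulVec, mulVec_mulVec, hBA]
  obtain ⟨ε, hε, hεle⟩ :=
    exists_pos_smul_le (B *ᵥ x) (hK₂ (max K₁ K₂) (le_max_right _ _))
  rw [hBd, le_sub_iff_add_le, ← add_smul, add_comm] at hεle
  have hBx : ∀ i, 0 < (B *ᵥ x) i := hK₁ (max K₁ K₂) (le_max_left _ _)
  obtain ⟨i₀, -⟩ := exists_pos_of_ne_zero hx hx0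
  exact ⟨lam + ε, by linarith, exists_mem_stdSimplex_smul_le (fun i => (hBx i).le)
    (fun h => (hBx i₀).ne' (congrFun h i₀)) hεle⟩

lemma le_card_of_smul_le_adjMat_mulVec {mu : ℝ} {z : α → ℝ} (hz : z ∈ stdSimplex ℝ α)
    (h : mu • z ≤ adjMat F *ᵥ z) : mu ≤ Fintype.card α :=
  calc mu = ∑ i, mu * z i := by rw [← Finset.mul_sum, hz.2, mul_one]
    _ ≤ ∑ i, (adjMat F *ᵥ z) i := Finset.sum_le_sum fun i _ => h i
    _ ≤ ∑ _i : α, ∑ j, z j := Finset.sum_le_sum fun i _ => adjMat_mulVec_le_sum F hz.1 i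
    _ = Fintype.card α := by simp [hz.2]

/-- Collatz–Wielandt: maximize `mu` over the compact set of pairs `(mu, z)` with `z` in the
standard simplex, `mu • z ≤ A z` and `mu` at least an improvement of `lam`; by the improvement
step the maximum is attained at an eigenvector. -/
theorem exists_gt_mem_compSpec_adjMat (hsc : ∀ a b, ReflTransGen F a b) {lam : ℝ}
    {x : α → ℝ} (hx : 0 ≤ x) (hle : lam • x ≤ adjMat F *ᵥ x)
    (hne : lam • x ≠ adjMat F *ᵥ x) :
    ∃ mu > lam, mu ∈ compSpec (adjMat F) := by
  obtain ⟨lam₁, hlam₁, y, hy, hy_le⟩ := exists_gt_smul_le_adjMat_mulVec hsc hx hle hne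
  let K := (Set.Icc lam₁ (Fintype.card α) ×ˢ stdSimplex ℝ α) ∩
    {p : ℝ × (α → ℝ) | p.1 • p.2 ≤ adjMat F *ᵥ p.2}
  have hK : IsCompact K := (isCompact_Icc.prod (isCompact_stdSimplex ℝ α)).inter_right
    (isClosed_le (by fun_prop) (by fun_prop))
  obtain ⟨⟨mu, z⟩, ⟨⟨hmu, hz⟩, hz_le⟩, hmax⟩ := hK.exists_isMaxOn
    ⟨(lam₁, y), ⟨⟨le_rfl, le_card_of_smul_le_adjMat_mulVec hy hy_le⟩, hy⟩, hy_le⟩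
    continuous_fst.continuousOn
  have heig : mu • z = adjMat F *ᵥ z := by
    by_contra hne'
    obtain ⟨mu', hmu', z', hz', hz'_le⟩ := exists_gt_smul_le_adjMat_mulVec hsc hz.1 hz_le hne'
    exact (isMaxOn_iff.1 hmax (mu', z') ⟨⟨⟨hmu.1.trans hmu'.le,
      le_card_of_smul_le_adjMat_mulVec hz' hz'_le⟩, hz'⟩, hz'_le⟩).not_gt hmu'
  refine ⟨mu, hlam₁.trans_le hmu.1,
    mem_compSpec_adjMat_iff.2 ⟨z, ?_, hz.1, fun i _ => ?_⟩⟩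
  · rintro rfl
    simpa using hz.2
  · simpa using (congrFun heig i).symm

theorem exists_one_lt_mem_compSpec_adjMat (hsc : ∀ a b, ReflTransGen F a b) {a b c : α}
    (hab : F a b) (hac : F a c) (hbc : b ≠ c) : ∃ mu > 1, mu ∈ compSpec (adjMat F) := by
  have : Nontrivial α := ⟨⟨b, c, hbc⟩⟩
  refine exists_gt_mem_compSpec_adjMat hsc (x := fun _ => 1) (fun _ => zero_le_one)
    (fun i => ?_) (fun h => ?_)
  · obtain ⟨j, hij⟩ := exists_adj_of_forall_reflTransGen hsc i
    simpa [adjMat_mulVec_one] using Finset.card_pos.2 ⟨j, by simpa using hij⟩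
  · have hcard : 1 < #{j | F a j} := Finset.one_lt_card.2
      ⟨b, by simpa using hab, c, by simpa using hac, hbc⟩
    have := congrFun h a
    simp only [adjMat_mulVec_one, Pi.smul_apply, smul_eq_mul, mul_one] at this
    exact hcard.ne (by exact_mod_cast this)

end CollatzWielandt

section Classification

variable {V : Type*} {E : V → V → Prop}

lemma eq_singleton_or_isCycleDigraph_of_compSpec_subset [Fintype V]
    (hE : compSpec (adjMat E) ⊆ {0, 1}) (v : V) :
    component E v = {v} ∨ IsCycleDigraph (induceRel E (component E v)) := by
  by_contra! hv
  have : Nontrivial (component E v) :=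
    ((Set.nontrivial_iff_ne_singleton (mem_component_self E v)).2 hv.1).coe_sort
  obtain hcyc | ⟨a, b, c, hab, hac, hbc⟩ :=
    isCycleDigraph_or_exists_adj_adj_ne (reflTransGen_induceRel_component (E := E) (v := v))
  · exact hv.2 hcyc
  obtain ⟨mu, hmu, hmem⟩ :=
    exists_one_lt_mem_compSpec_adjMat reflTransGen_induceRel_component hab hac hbc
  obtain h | h : mu = 0 ∨ mu = 1 := hE (compSpec_adjMat_induceRel_subset _ hmem)
  all_goals linarith

lemma isCycleDigraph_component_of_transGen (hloop : ∀ v, ¬ E v v) {v : V}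
    (hv : component E v = {v} ∨ IsCycleDigraph (induceRel E (component E v)))
    (hcycle : TransGen E v v) : IsCycleDigraph (induceRel E (component E v)) := by
  refine hv.resolve_left fun h => ?_
  obtain ⟨w, hvw, hwv⟩ := TransGen.head'_iff.1 hcycle
  have hw : w ∈ component E v := ⟨hwv, .single hvw⟩
  rw [h, Set.mem_singleton_iff] at hw
  exact hloop v (hw ▸ hvw)

end Classification

/-- `Π(D) = {0,1}` iff `D` has a directed cycle and each strongly
connected component of `D` is a directed cycle or an isolated vertex. -/
theorem stmt10 {V : Type*} [Fintype V] [Nonempty V] (E : V → V → Prop)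
    (hloop : ∀ v, ¬ E v v) :
    compSpec (adjMat E) = {0, 1} ↔
      ((∃ v, Relation.TransGen E v v) ∧
        ∀ v : V, component E v = {v} ∨ IsCycleDigraph (induceRel E (component E v))) := by
  constructor
  · intro hspec
    exact ⟨exists_transGen_self_of_mem_compSpec one_ne_zero (by simp [hspec]),
      eq_singleton_or_isCycleDigraph_of_compSpec_subset hspec.subset⟩
  · rintro ⟨⟨v, hv⟩, hcomp⟩
    refine (compSpec_adjMat_subset_zero_one (E := E) fun v a ha b hb c hc =>
      eq_of_adj_of_mem_component (hcomp v) ha hb hc).antisymm ?_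
    rintro _ (rfl | rfl)
    · exact zero_mem_compSpec_adjMat hloop
    · exact compSpec_adjMat_induceRel_subset _
        (one_mem_compSpec_adjMat_of_isCycleDigraph
          (isCycleDigraph_component_of_transGen hloop (hcomp v) hv))
end
end
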